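/- Let (D_n) be a partition of ℕ into consecutive intervals with |D_n| = k for all n ∈ (k(k−1)/2, k(k+1)/2], and let μ_n be the uniform probability measure on D_n. Then for every bijection φ: ℕ → ℕ, the ideal J = {φ[A] : A ∈ Exh(sup_n μ_n)} is not increasing-invariant. -/
import Mathlib


open Filter Finset Topology

/-- `cnt A n = |A ∩ [0,n)|`. -/
noncomputable def cnt (A : Set ℕ) (n : ℕ) : ℕ := (A ∩ Set.Iio n).ncard

/-- The simple density ideal associated to a weight `g`. -/
def Zg (g : ℕ → ℝ) : Set (Set ℕ) :=
  {A | Tendsto (fun n => (cnt A n : ℝ) / g n) atTop (𝓝 0)}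

/-- The ideal of asymptotic density zero sets. -/
def Zid : Set (Set ℕ) :=
  {A | Tendsto (fun n => (cnt A n : ℝ) / n) atTop (𝓝 0)}

/-- An ideal is increasing-invariant. -/
def IncInv (I : Set (Set ℕ)) : Prop :=
  ∀ B ∈ I, ∀ C : Set ℕ, (∀ n, cnt C n ≤ cnt B n) → C ∈ I

/-- Tallness. -/
def Tall (I : Set (Set ℕ)) : Prop :=
  ∀ A : Set ℕ, A.Infinite → ∃ B ⊆ A, B.Infinite ∧ B ∈ I

/-- The conditions on `f` for the Erdős–Ulam ideal `EU f` to be defined. -/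
def EUcond (f : ℕ → ℝ) : Prop :=
  (∀ n, 0 ≤ f n) ∧ Tendsto (fun n => ∑ i ∈ Finset.range n, f i) atTop atTop ∧
    Tendsto (fun n => f n / ∑ i ∈ Finset.range (n + 1), f i) atTop (𝓝 0)

/-- The Erdős–Ulam ideal associated to `f`. -/
def EU (f : ℕ → ℝ) : Set (Set ℕ) :=
  {A | Tendsto
    (fun n => (∑ i ∈ Finset.range n, Set.indicator A f i) / ∑ i ∈ Finset.range n, f i)
    atTop (𝓝 0)}

/-- Being an Erdős–Ulam ideal. -/
def IsEUIdeal (I : Set (Set ℕ)) : Prop := ∃ f : ℕ → ℝ, EUcond f ∧ I = EU f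
/-- `sz n` is the unique `k` with `k(k-1)/2 < n ≤ k(k+1)/2` (and `sz 0 = 0`),
i.e. the length of the `n`-th interval `D_n` (`D_0 = ∅`). -/
noncomputable def sz (n : ℕ) : ℕ :=
  Nat.find (show ∃ k, n ≤ k * (k + 1) / 2 from ⟨2 * n, by
    have h1 : 2 * n * (2 * n + 1) = 2 * (n * (2 * n + 1)) := by ring
    rw [h1, Nat.mul_div_cancel_left _ (by norm_num : 0 < 2)]
    nlinarith⟩)

/-- Left endpoints of the consecutive intervals `D_n` with `|D_n| = sz n`. -/
noncomputable def s19 (n : ℕ) : ℕ := ∑ k ∈ Finset.range n, sz k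

/-- The uniform probability measure on `D_n = [s19 n, s19 (n+1))`, applied to `A`. -/
noncomputable def mu19 (n : ℕ) (A : Set ℕ) : ℝ :=
  ∑ i ∈ Finset.Ico (s19 n) (s19 (n + 1)),
    Set.indicator A (fun _ => (1 : ℝ) / sz n) i

-- basics
lemma szP (n : ℕ) : ∃ k, n ≤ k * (k + 1) / 2 := by
  refine ⟨2 * n, ?_⟩
  have h1 : 2 * n * (2 * n + 1) = 2 * (n * (2 * n + 1)) := by ring
  rw [h1, Nat.mul_div_cancel_left _ (by norm_num : 0 < 2)]
  nlinarith

lemma sz_eq (n : ℕ) : sz n = Nat.find (szP n) := rfl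

lemma sz_spec (n : ℕ) : n ≤ sz n * (sz n + 1) / 2 := by
  rw [sz_eq]; exact Nat.find_spec (szP n)

lemma sz_min {n k : ℕ} (h : n ≤ k * (k + 1) / 2) : sz n ≤ k := by
  rw [sz_eq]; exact Nat.find_min' _ h

lemma sz_mono : Monotone sz := by
  intro a b hab
  rw [sz_eq, sz_eq]
  exact Nat.find_mono (fun k hk => le_trans hab hk)

lemma sz_zero : sz 0 = 0 := Nat.le_zero.mp (sz_min (by norm_num))

lemma sz_pos {n : ℕ} (h : 1 ≤ n) : 1 ≤ sz n := by
  by_contra hc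
  push_neg at hc
  have h0 : sz n = 0 := by omega
  have h1 := sz_spec n
  rw [h0] at h1
  simp at h1
  omega

lemma sz_le_sqrt (n : ℕ) : sz n ≤ Nat.sqrt (2 * n) + 1 := by
  by_contra hc
  push_neg at hc
  set k := sz n with hk
  have h1 : Nat.sqrt (2 * n) + 1 ≤ k - 1 := by omega
  have h2 : 2 * n < (k - 1) * (k - 1) := by
    calc 2 * n < (Nat.sqrt (2*n) + 1) * (Nat.sqrt (2*n) + 1) := Nat.lt_succ_sqrt (2*n)
      _ ≤ (k-1) * (k-1) := Nat.mul_le_mul h1 h1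
  have hkk : 2 * n + 1 ≤ (k-1) * k := le_trans h2 (Nat.mul_le_mul_left _ (by omega))
  have h4 : sz n ≤ k - 1 := sz_min (by
    have he : (k - 1) * (k - 1 + 1) = (k-1) * k := by congr 1; omega
    rw [he]; omega)
  omega

lemma sqrt_le_sz (n : ℕ) : Nat.sqrt n ≤ sz n + 1 := by
  have h := sz_spec n
  have h2 : n ≤ (sz n + 1) * (sz n + 1) := by
    have h3 : sz n * (sz n + 1) / 2 ≤ sz n * (sz n + 1) := Nat.div_le_self _ _
    nlinarith [Nat.zero_le (sz n)]
  calc Nat.sqrt n ≤ Nat.sqrt ((sz n + 1) * (sz n + 1)) := Nat.sqrt_le_sqrt h2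
    _ = sz n + 1 := Nat.sqrt_eq _

lemma sz_tendsto : ∀ K : ℕ, ∃ N, ∀ n ≥ N, K ≤ sz n := by
  intro K
  refine ⟨(K+1) * (K+1), fun n hn => ?_⟩
  have h1 : K + 1 ≤ Nat.sqrt n := Nat.le_sqrt.mpr (le_trans (le_refl _) hn)
  have := sqrt_le_sz n
  omega

lemma s19_succ (n : ℕ) : s19 (n + 1) = s19 n + sz n := Finset.sum_range_succ _ _

lemma s19_mono : Monotone s19 := by
  intro a b hab
  exact Finset.sum_le_sum_of_subset (Finset.range_subset_range.mpr hab)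

lemma s19_ge (n : ℕ) : n ≤ s19 n + 1 := by
  induction n with
  | zero => simp
  | succ k ih =>
    rw [s19_succ]
    rcases Nat.eq_zero_or_pos k with hk | hk
    · omega
    · have := sz_pos hk; omega

lemma s19_zero : s19 0 = 0 := rfl

lemma idxP (x : ℕ) : ∃ n, x < s19 (n + 1) := by
  refine ⟨x + 1, ?_⟩
  have := s19_ge (x + 2)
  show x < s19 (x + 2)
  omega

/-- the index of the block containing `x` -/
noncomputable def idx (x : ℕ) : ℕ := Nat.find (idxP x)

lemma idx_lt (x : ℕ) : x < s19 (idx x + 1) := Nat.find_spec (idxP x)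

lemma idx_ge (x : ℕ) : s19 (idx x) ≤ x := by
  rcases Nat.eq_zero_or_pos (idx x) with h | h
  · rw [h, s19_zero]; omega
  · have hm := Nat.find_min (idxP x) (show idx x - 1 < idx x by omega)
    push_neg at hm
    have he : idx x - 1 + 1 = idx x := by omega
    rw [he] at hm
    exact hm

lemma idx_eq {x n : ℕ} (h1 : s19 n ≤ x) (h2 : x < s19 (n + 1)) : idx x = n := by
  have hle : idx x ≤ n := Nat.find_min' _ h2
  rcases lt_or_eq_of_le hle with hlt | he
  · have h3 : s19 (idx x + 1) ≤ s19 n := s19_mono (by omega)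
    have := idx_lt x
    omega
  · exact he

lemma lt_s19_of_idx_lt {x g : ℕ} (h : idx x < g) : x < s19 g := by
  have := idx_lt x
  exact lt_of_lt_of_le this (s19_mono (by omega))
lemma blockFin_card (n : ℕ) : (Finset.Ico (s19 n) (s19 (n + 1))).card = sz n := by
  rw [Nat.card_Ico, s19_succ]; omega

open Classical in
lemma mu19_eq (n : ℕ) (X : Set ℕ) :
    mu19 n X = (((Finset.Ico (s19 n) (s19 (n + 1))).filter (· ∈ X)).card : ℝ) * ((1:ℝ) / sz n) := by
  unfold mu19
  classical
  rw [show (∑ i ∈ Finset.Ico (s19 n) (s19 (n + 1)), Set.indicator X (fun _ => (1 : ℝ) / sz n) i)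
      = ∑ i ∈ (Finset.Ico (s19 n) (s19 (n + 1))).filter (· ∈ X), (1:ℝ) / sz n from ?_]
  · rw [Finset.sum_const, nsmul_eq_mul]
  · rw [Finset.sum_filter]
    apply Finset.sum_congr rfl
    intro i _
    by_cases h : i ∈ X <;> simp [Set.indicator, h]

lemma mu19_nonneg (n : ℕ) (X : Set ℕ) : 0 ≤ mu19 n X := by
  rw [mu19_eq]
  positivity

lemma mu19_full (n : ℕ) (hn : 1 ≤ n) (X : Set ℕ)
    (hX : ∀ x, s19 n ≤ x → x < s19 (n + 1) → x ∈ X) : mu19 n X = 1 := by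
  classical
  rw [mu19_eq]
  have hfilter : (Finset.Ico (s19 n) (s19 (n + 1))).filter (· ∈ X) = Finset.Ico (s19 n) (s19 (n+1)) := by
    apply Finset.filter_true_of_mem
    intro x hx
    rw [Finset.mem_Ico] at hx
    exact hX x hx.1 hx.2
  rw [hfilter, blockFin_card]
  have : (0:ℝ) < sz n := by
    have := sz_pos hn; positivity
  field_simp

-- selection lemma
lemma select (j : ℕ) (hj : 1 ≤ j) (E : Finset ℕ) (hE : ∀ x ∈ E, 4 * j ≤ sz (idx x)) :
    ∃ S ⊆ E, (∀ n, 2 * j * ((S.filter (fun x => idx x = n)).card) ≤ sz n) ∧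
      E.card ≤ 4 * j * S.card := by
  classical
  set En : ℕ → Finset ℕ := fun n => E.filter (fun x => idx x = n) with hEn
  have hEn_le : ∀ n, (En n).card ≤ sz n := by
    intro n
    have hsub : En n ⊆ Finset.Ico (s19 n) (s19 (n + 1)) := by
      intro x hx
      rw [hEn, Finset.mem_filter] at hx
      rw [Finset.mem_Ico, ← hx.2]
      exact ⟨idx_ge x, idx_lt x⟩
    calc (En n).card ≤ _ := Finset.card_le_card hsub
      _ = sz n := blockFin_card n
  have hch : ∀ n : ℕ, ∃ F ⊆ En n, F.card = min ((En n).card) (sz n / (2 * j)) :=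
    fun n => Finset.exists_subset_card_eq (min_le_left _ _)
  choose F hF1 hF2 using hch
  set I := E.image idx with hI
  refine ⟨I.biUnion F, ?_, ?_, ?_⟩
  · intro x hx
    rw [Finset.mem_biUnion] at hx
    obtain ⟨n, _, hxF⟩ := hx
    have := hF1 n hxF
    rw [hEn, Finset.mem_filter] at this
    exact this.1
  · intro n
    have hsub : (I.biUnion F).filter (fun x => idx x = n) ⊆ F n := by
      intro x hx
      rw [Finset.mem_filter, Finset.mem_biUnion] at hx
      obtain ⟨⟨n', _, hxF⟩, hidx⟩ := hx
      have := hF1 n' hxF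
      rw [hEn, Finset.mem_filter] at this
      rw [← hidx, this.2]
      exact hxF
    have h1 : ((I.biUnion F).filter (fun x => idx x = n)).card ≤ sz n / (2 * j) := by
      calc _ ≤ (F n).card := Finset.card_le_card hsub
        _ = min ((En n).card) (sz n / (2 * j)) := hF2 n
        _ ≤ sz n / (2 * j) := min_le_right _ _
    calc 2 * j * ((I.biUnion F).filter (fun x => idx x = n)).card
        ≤ 2 * j * (sz n / (2 * j)) := Nat.mul_le_mul_left _ h1
      _ ≤ sz n := Nat.mul_div_le _ _
  · have hdisj : ∀ n ∈ I, ∀ n' ∈ I, n ≠ n' → Disjoint (F n) (F n') := by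
      intro n _ n' _ hne
      rw [Finset.disjoint_left]
      intro x hx hx'
      have h1 := hF1 n hx; have h2 := hF1 n' hx'
      rw [hEn, Finset.mem_filter] at h1 h2
      exact hne (h1.2 ▸ h2.2 ▸ rfl)
    have hcard : (I.biUnion F).card = ∑ n ∈ I, (F n).card := Finset.card_biUnion hdisj
    have hdisj2 : ∀ n ∈ I, ∀ n' ∈ I, n ≠ n' → Disjoint (En n) (En n') := by
      intro n _ n' _ hne
      rw [Finset.disjoint_left]
      intro x hx hx'
      rw [hEn, Finset.mem_filter] at hx hx'
      exact hne (hx.2 ▸ hx'.2 ▸ rfl)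
    have hEeq : E = I.biUnion En := by
      ext x
      constructor
      · intro hx
        rw [Finset.mem_biUnion]
        exact ⟨idx x, Finset.mem_image_of_mem idx hx, by rw [hEn, Finset.mem_filter]; exact ⟨hx, rfl⟩⟩
      · intro hx
        rw [Finset.mem_biUnion] at hx
        obtain ⟨n, _, hxE⟩ := hx
        rw [hEn, Finset.mem_filter] at hxE
        exact hxE.1
    have hEcard : E.card = ∑ n ∈ I, (En n).card := by
      rw [hEeq]; exact Finset.card_biUnion hdisj2
    rw [hEcard, hcard, Finset.mul_sum]
    apply Finset.sum_le_sum
    intro n hn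
    rw [hF2 n]
    -- per-block estimate
    obtain ⟨x, hxE, hxidx⟩ := Finset.mem_image.mp hn
    have hsz : 4 * j ≤ sz n := hxidx ▸ hE x hxE
    set c := (En n).card with hc
    set s := sz n with hs
    set q := s / (2 * j) with hq
    have hcs : c ≤ s := hEn_le n
    have hdm : 2 * j * q + s % (2 * j) = s := by rw [hq]; exact Nat.div_add_mod s (2 * j)
    have hml : s % (2 * j) < 2 * j := Nat.mod_lt _ (by omega)
    rcases le_or_gt c q with h | h
    · rw [min_eq_left h]; nlinarith
    · rw [min_eq_right h.le]
      have hq2 : 2 ≤ q := by nlinarith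
      nlinarith
lemma sqrt_le_add_div (x k : ℕ) (hk : 1 ≤ k) : Nat.sqrt x ≤ k + x / k := by
  rcases le_or_gt (Nat.sqrt x) k with h | h
  · exact le_trans h (Nat.le_add_right _ _)
  · have h1 : Nat.sqrt x * k ≤ Nat.sqrt x * Nat.sqrt x := Nat.mul_le_mul_left _ h.le
    have h2 : Nat.sqrt x * Nat.sqrt x ≤ x := by
      have := Nat.sqrt_le' x
      rwa [sq] at this
    have h3 : Nat.sqrt x ≤ x / k := (Nat.le_div_iff_mul_le (by omega)).mpr (le_trans h1 h2)
    omega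

lemma exists_V (c d jj : ℕ) : ∃ V, c < V ∧ c + d * (Nat.sqrt (2 * (V + jj)) + 1) ≤ V := by
  set M := c + 8 * (d * (d + 1)) + d + jj + 2 with hM
  refine ⟨2 * M, by omega, ?_⟩
  set V := 2 * M with hV
  have h1 : Nat.sqrt (2 * (V + jj)) ≤ 8 * (d + 1) + (2 * (V + jj)) / (8 * (d + 1)) :=
    sqrt_le_add_div _ _ (by omega)
  set t := (2 * (V + jj)) / (8 * (d + 1)) with ht
  have h2 : 8 * (d + 1) * t ≤ 2 * (V + jj) := by rw [ht]; exact Nat.mul_div_le _ _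
  have h3 : d * t ≤ (d + 1) * t := Nat.mul_le_mul_right _ (by omega)
  have h4 : 8 * ((d + 1) * t) ≤ 2 * V + 2 * jj := by
    calc 8 * ((d + 1) * t) = 8 * (d + 1) * t := by ring
      _ ≤ 2 * (V + jj) := h2
      _ = 2 * V + 2 * jj := by ring
  have h5 : d * (Nat.sqrt (2 * (V + jj)) + 1) ≤ d * (8 * (d + 1) + t + 1) :=
    Nat.mul_le_mul_left _ (by omega)
  have h6 : d * (8 * (d + 1) + t + 1) = 8 * (d * (d + 1)) + d * t + d := by ring
  set u := d * t with hu
  set P := d * (d+1) with hP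
  set q := d * (Nat.sqrt (2 * (V + jj)) + 1) with hqd
  set w := (d+1) * t with hw
  omega

lemma card_block_filter_le (F : Finset ℕ) (n : ℕ) :
    (F.filter (fun x => idx x = n)).card ≤ sz n := by
  classical
  have hsub : F.filter (fun x => idx x = n) ⊆ Finset.Ico (s19 n) (s19 (n + 1)) := by
    intro x hx
    rw [Finset.mem_filter] at hx
    rw [Finset.mem_Ico, ← hx.2]
    exact ⟨idx_ge x, idx_lt x⟩
  calc _ ≤ _ := Finset.card_le_card hsub
    _ = sz n := blockFin_card n

lemma exists_block (φ : ℕ → ℕ) (hφ : Function.Bijective φ) (V j : ℕ) :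
    ∃ m, j ≤ m ∧ m ≤ V + j ∧ ∀ x, s19 m ≤ x → x < s19 (m + 1) → V ≤ φ x := by
  classical
  set ψ := Function.surjInv hφ.2 with hψ
  set H := ((Finset.range V).image (fun y => idx (ψ y))) ∪ Finset.range j with hH
  have hHcard : H.card ≤ V + j := by
    calc H.card ≤ ((Finset.range V).image (fun y => idx (ψ y))).card + (Finset.range j).card :=
          Finset.card_union_le _ _
      _ ≤ V + j := by
          have := Finset.card_image_le (s := Finset.range V) (f := fun y => idx (ψ y))
          simp at this ⊢
          omega
  have hnotsub : ¬ (Finset.range (V + j + 1) ⊆ H) := by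
    intro hsub
    have := Finset.card_le_card hsub
    simp at this
    omega
  obtain ⟨m, hm1, hm2⟩ := Finset.not_subset.mp hnotsub
  rw [Finset.mem_range] at hm1
  refine ⟨m, ?_, by omega, ?_⟩
  · by_contra hc
    exact hm2 (Finset.mem_union_right _ (Finset.mem_range.mpr (by omega)))
  · intro x hx1 hx2
    by_contra hc
    push_neg at hc
    apply hm2
    apply Finset.mem_union_left
    rw [Finset.mem_image]
    refine ⟨φ x, Finset.mem_range.mpr hc, ?_⟩
    have hinv : ψ (φ x) = x := by
      apply hφ.1
      rw [hψ]
      exact Function.surjInv_eq hφ.2 (φ x)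
    rw [hinv]
    exact idx_eq hx1 hx2

structure Stg where
  p : ℕ
  S : Finset ℕ
  m : ℕ
  G : ℕ

def StepOK (φ : ℕ → ℕ) (j : ℕ) (prev cur : Stg) : Prop :=
  prev.p < cur.p ∧
  (∀ x ∈ cur.S, prev.p ≤ φ x ∧ φ x < cur.p) ∧
  sz cur.m ≤ cur.S.card ∧
  j ≤ cur.m ∧
  (∀ x, s19 cur.m ≤ x → x < s19 (cur.m + 1) → cur.p ≤ φ x) ∧
  (∀ x ∈ cur.S, prev.G ≤ idx x ∧ idx x < cur.G) ∧
  prev.G ≤ cur.G ∧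
  (∀ n, 2 * j * ((cur.S.filter (fun x => idx x = n)).card) ≤ sz n)

lemma step_exists (φ : ℕ → ℕ) (hφ : Function.Bijective φ) (j : ℕ) (hj : 1 ≤ j) (prev : Stg) : ∃ cur, StepOK φ j prev cur := by
  classical
  -- choose g
  obtain ⟨N, hN⟩ := sz_tendsto (4 * j)
  set g := max N prev.G with hg
  have hszg : 4 * j ≤ sz g := hN g (le_max_left _ _)
  have hgG : prev.G ≤ g := le_max_right _ _
  -- choose V
  obtain ⟨V, hV1, hV2⟩ := exists_V (prev.p + s19 g) (4 * j) j
  -- choose m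
  obtain ⟨m, hm1, hm2, hm3⟩ := exists_block φ hφ V j
  have hszm : sz m ≤ Nat.sqrt (2 * (V + j)) + 1 := by
    calc sz m ≤ sz (V + j) := sz_mono hm2
      _ ≤ Nat.sqrt (2 * (V + j)) + 1 := sz_le_sqrt _
  -- the pool E
  set ψ := Function.surjInv hφ.2 with hψ
  have hinv : ∀ y, φ (ψ y) = y := fun y => Function.surjInv_eq hφ.2 y
  set TV := (Finset.range V).image ψ with hTV
  have hTVmem : ∀ x, x ∈ TV ↔ φ x < V := by
    intro x
    rw [hTV, Finset.mem_image]
    constructor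
    · rintro ⟨y, hy, rfl⟩
      rw [hinv y]; exact Finset.mem_range.mp hy
    · intro hx
      refine ⟨φ x, Finset.mem_range.mpr hx, ?_⟩
      apply hφ.1; rw [hinv]
  have hTVcard : TV.card = V := by
    rw [hTV, Finset.card_image_of_injective _ (Function.injective_surjInv hφ.2), Finset.card_range]
  set E := TV.filter (fun x => prev.p ≤ φ x ∧ g ≤ idx x) with hE
  have hEcard : V ≤ E.card + (prev.p + s19 g) := by
    have hsub : TV \ E ⊆ (Finset.range prev.p).image ψ ∪ Finset.range (s19 g) := by
      intro x hx
      rw [Finset.mem_sdiff] at hx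
      obtain ⟨hxTV, hxE⟩ := hx
      rw [hE, Finset.mem_filter] at hxE
      push_neg at hxE
      rcases le_or_gt prev.p (φ x) with h | h
      · have hidx := hxE hxTV h
        apply Finset.mem_union_right
        rw [Finset.mem_range]
        exact lt_s19_of_idx_lt hidx
      · apply Finset.mem_union_left
        rw [Finset.mem_image]
        refine ⟨φ x, Finset.mem_range.mpr h, ?_⟩
        apply hφ.1; rw [hinv]
    have h1 : (TV \ E).card ≤ prev.p + s19 g := by
      calc (TV \ E).card ≤ _ := Finset.card_le_card hsub
        _ ≤ ((Finset.range prev.p).image ψ).card + (Finset.range (s19 g)).card :=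
            Finset.card_union_le _ _
        _ ≤ prev.p + s19 g := by
            have := Finset.card_image_le (s := Finset.range prev.p) (f := ψ)
            simp at this ⊢; omega
    have h2 : E ⊆ TV := Finset.filter_subset _ _
    have h3 := Finset.card_sdiff_add_card_eq_card h2
    omega
  -- select S
  have hEblocks : ∀ x ∈ E, 4 * j ≤ sz (idx x) := by
    intro x hx
    rw [hE, Finset.mem_filter] at hx
    exact le_trans hszg (sz_mono hx.2.2)
  obtain ⟨S, hS1, hS2, hS3⟩ := select j hj E hEblocks
  -- S is big enough
  have hSm : sz m ≤ S.card := by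
    have h1 : 4 * j * sz m ≤ 4 * j * (Nat.sqrt (2 * (V + j)) + 1) := Nat.mul_le_mul_left _ hszm
    have h2 : prev.p + s19 g + 4 * j * (Nat.sqrt (2 * (V + j)) + 1) ≤ V := hV2
    have h3 : 4 * j * sz m ≤ 4 * j * S.card := by omega
    have hj4 : 0 < 4 * j := by omega
    exact Nat.le_of_mul_le_mul_left h3 hj4
  refine ⟨⟨V, S, m, max prev.G (S.sup idx + 1)⟩, ?_, ?_, hSm, hm1, hm3, ?_, le_max_left _ _, hS2⟩
  · show prev.p < V
    omega
  · intro x hx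
    have hxE := hS1 hx
    rw [hE, Finset.mem_filter] at hxE
    exact ⟨hxE.2.1, (hTVmem x).mp hxE.1⟩
  · intro x hx
    have hxE := hS1 hx
    rw [hE, Finset.mem_filter] at hxE
    constructor
    · exact le_trans hgG hxE.2.2
    · have h4 : idx x ≤ S.sup idx := Finset.le_sup hx
      show idx x < max prev.G (S.sup idx + 1)
      have h5 := le_max_right prev.G (S.sup idx + 1)
      omega

noncomputable def sq19 (φ : ℕ → ℕ) (hφ : Function.Bijective φ) : ℕ → Stg
  | 0 => ⟨0, ∅, 0, 0⟩
  | (j + 1) => (step_exists φ hφ (j + 1) (by omega) (sq19 φ hφ j)).choose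

lemma seq_ok (φ : ℕ → ℕ) (hφ : Function.Bijective φ) (j : ℕ) :
    StepOK φ (j + 1) (sq19 φ hφ j) (sq19 φ hφ (j + 1)) :=
  (step_exists φ hφ (j + 1) (by omega) (sq19 φ hφ j)).choose_spec
noncomputable def Aset (φ : ℕ → ℕ) (hφ : Function.Bijective φ) : Set ℕ :=
  ⋃ j : ℕ, ↑((sq19 φ hφ (j + 1)).S)

noncomputable def Cset (φ : ℕ → ℕ) (hφ : Function.Bijective φ) : Set ℕ :=
  ⋃ j : ℕ, Set.Ico (s19 ((sq19 φ hφ (j + 1)).m)) (s19 ((sq19 φ hφ (j + 1)).m + 1))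

lemma seq_p_mono (φ : ℕ → ℕ) (hφ : Function.Bijective φ) : Monotone (fun j => (sq19 φ hφ j).p) :=
  monotone_nat_of_le_succ (fun j => (seq_ok φ hφ j).1.le)

lemma seq_p_ge (φ : ℕ → ℕ) (hφ : Function.Bijective φ) (j : ℕ) : j ≤ (sq19 φ hφ j).p := by
  induction j with
  | zero => simp [sq19]
  | succ k ih => have := (seq_ok φ hφ k).1; omega

lemma seq_G_mono (φ : ℕ → ℕ) (hφ : Function.Bijective φ) : Monotone (fun j => (sq19 φ hφ j).G) :=
  monotone_nat_of_le_succ (fun j => (seq_ok φ hφ j).2.2.2.2.2.2.1)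

lemma AsetinI (φ : ℕ → ℕ) (hφ : Function.Bijective φ) :
    Tendsto (fun n => mu19 n (Aset φ hφ)) atTop (𝓝 0) := by
  classical
  rw [Metric.tendsto_atTop]
  intro ε hε
  obtain ⟨K, hK⟩ := exists_nat_gt (1 / ε)
  have hK1 : 1 ≤ K := by
    by_contra hc
    push_neg at hc
    interval_cases K
    · simp at hK
      exact absurd hK (not_lt.mpr (le_of_lt (by positivity)))
  refine ⟨(sq19 φ hφ K).G, fun n hn => ?_⟩
  rw [Real.dist_eq, sub_zero, abs_of_nonneg (mu19_nonneg n _)]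
  rw [mu19_eq]
  set Fl := (Finset.Ico (s19 n) (s19 (n + 1))).filter (· ∈ Aset φ hφ) with hFl
  by_cases hemp : Fl.card = 0
  · rw [hemp]
    simpa using hε
  · obtain ⟨x, hx⟩ := Finset.card_pos.mp (Nat.pos_of_ne_zero hemp)
    rw [hFl, Finset.mem_filter, Finset.mem_Ico] at hx
    obtain ⟨⟨hx1, hx2⟩, hxA⟩ := hx
    have hidx : idx x = n := idx_eq hx1 hx2
    obtain ⟨j0, hj0⟩ := Set.mem_iUnion.mp hxA
    have hc6 := (seq_ok φ hφ j0).2.2.2.2.2.1 x hj0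
    have hj0K : K ≤ j0 + 1 := by
      by_contra hc
      push_neg at hc
      have : (sq19 φ hφ (j0 + 1)).G ≤ (sq19 φ hφ K).G := seq_G_mono φ hφ (by omega)
      omega
    -- Fl ⊆ stage j0's block-n elements
    have hsub : Fl ⊆ (sq19 φ hφ (j0 + 1)).S.filter (fun y => idx y = n) := by
      intro y hy
      rw [hFl, Finset.mem_filter, Finset.mem_Ico] at hy
      obtain ⟨⟨hy1, hy2⟩, hyA⟩ := hy
      have hyidx : idx y = n := idx_eq hy1 hy2
      obtain ⟨j1, hj1⟩ := Set.mem_iUnion.mp hyA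
      have hc6' := (seq_ok φ hφ j1).2.2.2.2.2.1 y hj1
      have hj1j0 : j1 = j0 := by
        by_contra hne
        rcases lt_or_gt_of_ne hne with h | h
        · have : (sq19 φ hφ (j1 + 1)).G ≤ (sq19 φ hφ j0).G := seq_G_mono φ hφ (by omega)
          omega
        · have : (sq19 φ hφ (j0 + 1)).G ≤ (sq19 φ hφ j1).G := seq_G_mono φ hφ (by omega)
          omega
      rw [Finset.mem_filter]
      exact ⟨hj1j0 ▸ hj1, hyidx⟩
    have hcap := (seq_ok φ hφ j0).2.2.2.2.2.2.2 n
    have hcard : Fl.card ≤ ((sq19 φ hφ (j0 + 1)).S.filter (fun y => idx y = n)).card :=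
      Finset.card_le_card hsub
    have hc1 : 1 ≤ Fl.card := Nat.pos_of_ne_zero hemp
    have hnat : 2 * (j0 + 1) * Fl.card ≤ sz n := le_trans (Nat.mul_le_mul_left _ hcard) hcap
    have hszpos : 1 ≤ sz n := by
      calc 1 ≤ 2 * (j0 + 1) * Fl.card := by nlinarith [hc1]
        _ ≤ sz n := hnat
    have hs0 : (0:ℝ) < sz n := by exact_mod_cast hszpos
    have hj0R : (0:ℝ) < 2 * ((j0:ℝ) + 1) := by positivity
    have hR : (Fl.card : ℝ) * (2 * ((j0:ℝ) + 1)) ≤ sz n := by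
      have h2 := (Nat.cast_le (α := ℝ)).mpr hnat
      push_cast at h2
      nlinarith [h2]
    have hfin : (Fl.card : ℝ) * (1 / sz n) ≤ 1 / (2 * ((j0:ℝ) + 1)) := by
      rw [mul_one_div, div_le_div_iff₀ hs0 hj0R]
      linarith [hR]
    have hKj : 1 / (2 * ((j0:ℝ) + 1)) ≤ 1 / (K : ℝ) := by
      apply one_div_le_one_div_of_le (by exact_mod_cast hK1)
      have h3 : (K:ℝ) ≤ (j0:ℝ) + 1 := by exact_mod_cast hj0K
      nlinarith
    have hKe : 1 / (K : ℝ) < ε := by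
      rw [div_lt_iff₀ (by exact_mod_cast hK1 : (0:ℝ) < K)]
      rw [div_lt_iff₀ hε] at hK
      nlinarith
    linarith
lemma CsetNotinI (φ : ℕ → ℕ) (hφ : Function.Bijective φ) :
    ¬ Tendsto (fun n => mu19 n (Cset φ hφ)) atTop (𝓝 0) := by
  intro h
  rw [Metric.tendsto_atTop] at h
  obtain ⟨N, hN⟩ := h (1/2) (by norm_num)
  set n := (sq19 φ hφ (N + 1)).m with hn
  have hm := (seq_ok φ hφ N).2.2.2.1
  have hnN : N ≤ n := by omega
  have hfull : mu19 n (Cset φ hφ) = 1 := by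
    apply mu19_full n (by omega)
    intro x hx1 hx2
    rw [Cset, Set.mem_iUnion]
    exact ⟨N, Set.mem_Ico.mpr ⟨hx1, hx2⟩⟩
  have := hN n hnN
  rw [hfull, Real.dist_eq, sub_zero] at this
  norm_num at this

lemma cnt_image (φ : ℕ → ℕ) (hφ : Function.Bijective φ) (X : Set ℕ) (n : ℕ) :
    cnt (φ '' X) n = (X ∩ φ ⁻¹' (Set.Iio n)).ncard := by
  unfold cnt
  rw [← Set.image_inter_preimage φ X (Set.Iio n), Set.ncard_image_of_injective _ hφ.1]

lemma counts (φ : ℕ → ℕ) (hφ : Function.Bijective φ) (n : ℕ) :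
    cnt (φ '' (Cset φ hφ)) n ≤ cnt (φ '' (Aset φ hφ)) n := by
  classical
  rw [cnt_image φ hφ, cnt_image φ hφ]
  set Tn := φ ⁻¹' (Set.Iio n) with hTn
  have hTnfin : Tn.Finite := Set.Finite.preimage (Set.injOn_of_injective hφ.1) (Set.finite_Iio n)
  set Jset := (Finset.range n).filter (fun j => (sq19 φ hφ (j + 1)).p < n) with hJset
  -- upper bound for C side
  have hupper : (Cset φ hφ ∩ Tn).ncard ≤
      ∑ j ∈ Jset, sz ((sq19 φ hφ (j + 1)).m) := by
    have hsub : Cset φ hφ ∩ Tn ⊆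
        ↑(Jset.biUnion (fun j => Finset.Ico (s19 ((sq19 φ hφ (j + 1)).m)) (s19 ((sq19 φ hφ (j + 1)).m + 1)))) := by
      rintro x ⟨hxC, hxT⟩
      rw [Cset, Set.mem_iUnion] at hxC
      obtain ⟨j, hj⟩ := hxC
      rw [Set.mem_Ico] at hj
      have hc5 := (seq_ok φ hφ j).2.2.2.2.1 x hj.1 hj.2
      have hxlt : φ x < n := hxT
      have hpj : (sq19 φ hφ (j + 1)).p < n := by omega
      have hjn : j < n := by
        have := seq_p_ge φ hφ (j + 1)
        omega
      simp only [Finset.coe_biUnion, Set.mem_iUnion]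
      refine ⟨j, ?_, ?_⟩
      · rw [Finset.mem_coe, hJset, Finset.mem_filter, Finset.mem_range]
        exact ⟨hjn, hpj⟩
      · rw [Finset.mem_coe, Finset.mem_Ico]
        exact hj
    calc (Cset φ hφ ∩ Tn).ncard
        ≤ _ := Set.ncard_le_ncard hsub (Set.finite_coe_iff.mp (by exact inferInstance))
      _ = (Jset.biUnion (fun j => Finset.Ico (s19 ((sq19 φ hφ (j + 1)).m)) (s19 ((sq19 φ hφ (j + 1)).m + 1)))).card :=
          Set.ncard_coe_finset _
      _ ≤ ∑ j ∈ Jset, (Finset.Ico (s19 ((sq19 φ hφ (j + 1)).m)) (s19 ((sq19 φ hφ (j + 1)).m + 1))).card :=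
          Finset.card_biUnion_le
      _ = ∑ j ∈ Jset, sz ((sq19 φ hφ (j + 1)).m) := by
          apply Finset.sum_congr rfl
          intro j _
          exact blockFin_card _
  -- lower bound for A side
  have hdisj : ∀ a ∈ Jset, ∀ b ∈ Jset, a ≠ b →
      Disjoint ((sq19 φ hφ (a + 1)).S) ((sq19 φ hφ (b + 1)).S) := by
    have key : ∀ a b : ℕ, a < b → Disjoint ((sq19 φ hφ (a + 1)).S) ((sq19 φ hφ (b + 1)).S) := by
      intro a b hab
      rw [Finset.disjoint_left]
      intro x hxa hxb
      have h1 := (seq_ok φ hφ a).2.1 x hxa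
      have h2 := (seq_ok φ hφ b).2.1 x hxb
      have h3 : (sq19 φ hφ (a + 1)).p ≤ (sq19 φ hφ b).p := seq_p_mono φ hφ (by omega)
      omega
    intro a _ b _ hab
    rcases lt_or_gt_of_ne hab with h | h
    · exact key a b h
    · exact (key b a h).symm
  have hlower : ∑ j ∈ Jset, sz ((sq19 φ hφ (j + 1)).m) ≤ (Aset φ hφ ∩ Tn).ncard := by
    have hsub2 : ↑(Jset.biUnion (fun j => (sq19 φ hφ (j + 1)).S)) ⊆ Aset φ hφ ∩ Tn := by
      intro x hx
      rw [Finset.mem_coe, Finset.mem_biUnion] at hx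
      obtain ⟨j, hjJ, hjS⟩ := hx
      rw [hJset, Finset.mem_filter] at hjJ
      have h1 := (seq_ok φ hφ j).2.1 x hjS
      constructor
      · rw [Aset, Set.mem_iUnion]
        exact ⟨j, hjS⟩
      · show φ x < n
        omega
    calc ∑ j ∈ Jset, sz ((sq19 φ hφ (j + 1)).m)
        ≤ ∑ j ∈ Jset, ((sq19 φ hφ (j + 1)).S).card := by
          apply Finset.sum_le_sum
          intro j _
          exact (seq_ok φ hφ j).2.2.1
      _ = (Jset.biUnion (fun j => (sq19 φ hφ (j + 1)).S)).card := (Finset.card_biUnion hdisj).symm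
      _ = (↑(Jset.biUnion (fun j => (sq19 φ hφ (j + 1)).S)) : Set ℕ).ncard := (Set.ncard_coe_finset _).symm
      _ ≤ (Aset φ hφ ∩ Tn).ncard :=
          Set.ncard_le_ncard hsub2 (hTnfin.subset (Set.inter_subset_right))
  omega
/-- no isomorphic copy of `Exh(sup μ_n)` is increasing-invariant. -/
theorem stmt_19 (φ : ℕ → ℕ) (hφ : Function.Bijective φ) :
    ¬ IncInv {S : Set ℕ |
      ∃ A ∈ {A : Set ℕ | Tendsto (fun n => mu19 n A) atTop (𝓝 0)}, S = φ '' A} := by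
  intro hInc
  have hB : φ '' (Aset φ hφ) ∈ {S : Set ℕ |
      ∃ A ∈ {A : Set ℕ | Tendsto (fun n => mu19 n A) atTop (𝓝 0)}, S = φ '' A} :=
    ⟨Aset φ hφ, AsetinI φ hφ, rfl⟩
  have hC := hInc _ hB (φ '' (Cset φ hφ)) (counts φ hφ)
  obtain ⟨A', hA', hEq⟩ := hC
  have hCA : Cset φ hφ = A' := Set.image_injective.mpr hφ.1 hEq
  exact CsetNotinI φ hφ (hCA ▸ hA')
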